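/- Let z be a regular S-parameter, κ₁ and κ₂ adjacent domains sharing a face τ contained in the hyperplane {xᵢ = θ}, with τ a right face of κ₁ and a left face of κ₂ (so κ₁ lies to the left of the threshold in coordinate i, κ₂ to the right). Suppose a solution x(t) of the S-system crosses from the interior of κ₁ to the interior of κ₂ through τ at time 0, with ẋᵢ(t) > 0 on a punctured neighborhood of 0. Then the wall labels satisfy L((τ, κ₁)) = −1 (absorbing wall of κ₁) and L((τ, κ₂)) = +1 (entrance wall of κ₂); i.e., both focal points satisfy Λᵢ(κ₁)/γᵢ > θ and Λᵢ(κ₂)/γᵢ > θ. -/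
import Mathlib

/-- If a solution of an S-system crosses a threshold wall
{xᵢ = θ} from the domain κ₁ (where xᵢ < θ) to the domain κ₂ (where xᵢ > θ)
with ẋᵢ > 0 on a punctured neighborhood of the crossing time, then at a
regular parameter both focal points lie above the threshold:
Λᵢ(κ₁)/γᵢ > θ and Λᵢ(κ₂)/γᵢ > θ (i.e. the wall is absorbing for κ₁ and an
entrance wall for κ₂).  Here `x` denotes the i-th coordinate of the solution
and Λ₁, Λ₂ the i-th components of the (constant) focal values on κ₁, κ₂. -/
theorem crossing_wall_labels
    (γ θ Λ₁ Λ₂ ε : ℝ) (hγ : 0 < γ) (hε : 0 < ε)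
    (x : ℝ → ℝ) (hcont : Continuous x) (hx0 : x 0 = θ)
    (hreg₁ : Λ₁ / γ ≠ θ) (hreg₂ : Λ₂ / γ ≠ θ)
    (hleft : ∀ t ∈ Set.Ioo (-ε) (0:ℝ), x t < θ)
    (hright : ∀ t ∈ Set.Ioo (0:ℝ) ε, θ < x t)
    (hode₁ : ∀ t ∈ Set.Ioo (-ε) (0:ℝ), HasDerivAt x (-γ * x t + Λ₁) t)
    (hode₂ : ∀ t ∈ Set.Ioo (0:ℝ) ε, HasDerivAt x (-γ * x t + Λ₂) t)
    (hpos₁ : ∀ t ∈ Set.Ioo (-ε) (0:ℝ), 0 < -γ * x t + Λ₁)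
    (hpos₂ : ∀ t ∈ Set.Ioo (0:ℝ) ε, 0 < -γ * x t + Λ₂) :
    θ < Λ₁ / γ ∧ θ < Λ₂ / γ := by
  constructor
  · -- limit argument from the left
    have hne : (Set.Ioo (-ε) (0:ℝ)).Nonempty := ⟨-ε/2, by constructor <;> nlinarith⟩
    have h0cl : (0:ℝ) ∈ closure (Set.Ioo (-ε) (0:ℝ)) := by
      rw [closure_Ioo (by linarith : -ε ≠ (0:ℝ))]
      exact ⟨le_of_lt (by linarith), le_refl 0⟩
    have hnb : (nhdsWithin (0:ℝ) (Set.Ioo (-ε) 0)).NeBot :=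
      mem_closure_iff_nhdsWithin_neBot.mp h0cl
    have htend : Filter.Tendsto (fun t => γ * x t) (nhdsWithin (0:ℝ) (Set.Ioo (-ε) 0))
        (nhds (γ * θ)) := by
      have : Filter.Tendsto (fun t => γ * x t) (nhds (0:ℝ)) (nhds (γ * θ)) := by
        have := (hcont.tendsto 0)
        rw [hx0] at this
        exact (Filter.Tendsto.const_mul γ this)
      exact this.mono_left nhdsWithin_le_nhds
    have hge : γ * θ ≤ Λ₁ := by
      refine le_of_tendsto htend ?_
      filter_upwards [self_mem_nhdsWithin] with t ht
      linarith [hpos₁ t ht]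
    have hge' : θ ≤ Λ₁ / γ := by
      rw [le_div_iff₀ hγ]; linarith [hge]
    exact lt_of_le_of_ne hge' (Ne.symm hreg₁)
  · have ht : (ε/2) ∈ Set.Ioo (0:ℝ) ε := ⟨by linarith, by linarith⟩
    have h1 := hpos₂ _ ht
    have h2 := hright _ ht
    rw [lt_div_iff₀ hγ]; nlinarith
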